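/- Let V bea complete discrete valuation ring with uniformiser π, let M be a torsionfree V-module, let T ⊆ M be a V-submodule, and let S ⊆ T be a V-submodule that is compactoid relative to T. Then there exists a V-submodule S′ with S ⊆ S′ ⊆ T such that S′ is compactoid relative to T and S is compactoid relative to S′. (This is the content of Proposition 3.6: for a torsionfree bornological V-module M, the module M′ obtained by equipping M with the compactoid bornology is nuclear, i.e., every compactoid subset of M is compactoid relative to a compactoid submodule.) -/

import Mathlib

open Pointwise

/-- `S` is compactoid relative to `T`: for every `n` there is a finite subset
`Fₙ ⊆ T` with `S ⊆ V·Fₙ + πⁿ T`. -/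
def CompactoidRel {V : Type*} [CommRing V] (π : V) {M : Type*} [AddCommGroup M]
    [Module V M] (S T : Submodule V M) : Prop :=
  ∀ n : ℕ, ∃ F : Finset M, (F : Set M) ⊆ (T : Set M) ∧
    S ≤ Submodule.span V (F : Set M) ⊔ π ^ n • T

/-!
Put `S' = S + Σₙ (πⁿT ∩ π⁻ⁿS)`, where `π⁻ⁿS` is the preimage of `S` under `πⁿ`.
Over a noetherian ring the finite sets witnessing that `S` is compactoid in `T` can be taken
inside `S`; then `x ∈ S` can be written `y + π²ⁿt` with `y` in such a span, and `πⁿt` lies in the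
`n`-th summand, so `S` is compactoid in `S'`. Modulo `πᵐT` only the summands with `n < m` survive,
and each is compactoid in `T`: as `π` is injective on `M`, `T ∩ π⁻ⁿ(span F)` embeds into
`span F` via `πⁿ`, hence is finitely generated.
-/

namespace Submodule

variable {R M N : Type*} [CommRing R] [AddCommGroup M] [Module R M] [AddCommGroup N] [Module R N]

theorem antitone_pow_smul (a : R) (T : Submodule R M) : Antitone fun n : ℕ => a ^ n • T :=
  antitone_nat_of_succ_le fun n => by
    simp only [pow_succ, mul_smul]
    exact smul_mono_right _ (smul_le_self_of_tower _ _)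

theorem comap_sup_map_le (f : M →ₗ[R] N) (A : Submodule R N) (B : Submodule R M) :
    comap f (A ⊔ map f B) ≤ comap f A ⊔ B :=
  calc comap f (A ⊔ map f B) ≤ comap f (map f (comap f A ⊔ B) ⊔ A) :=
        comap_mono (sup_le le_sup_right (le_sup_of_le_left (map_mono le_sup_right)))
    _ = comap f A ⊔ B := comap_map_sup_of_comap_le le_sup_left

theorem exists_finset_subset_le_span_sup [IsNoetherianRing R] {S A P : Submodule R M}
    (hA : A.FG) (hSA : S ≤ A ⊔ P) :
    ∃ F : Finset M, (F : Set M) ⊆ S ∧ S ≤ span R (F : Set M) ⊔ P := by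
  classical
  set q := P.mkQ
  have hSq : (span R (q '' S)).FG := by
    rw [← map_span, span_eq]
    refine hA.map q |>.of_le (map_le_iff_le_comap.2 ?_)
    rwa [comap_map_mkQ, sup_comm]
  obtain ⟨G, hGS, hG⟩ := (fg_span_iff_fg_span_finset_subset _).1 hSq
  obtain ⟨F, hFS, rfl⟩ := Finset.subset_set_image_iff.1 hGS
  refine ⟨F, hFS, ?_⟩
  have hmap : S.map q = (span R (F : Set M)).map q := by
    rw [map_span, ← Finset.coe_image, ← hG, ← map_span, span_eq]
  calc S ≤ comap q (S.map q) := le_comap_map _ _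
    _ = span R (F : Set M) ⊔ P := by rw [hmap, comap_map_mkQ, sup_comm]

end Submodule

open Submodule

namespace CompactoidRel

variable {V M : Type*} [CommRing V] [AddCommGroup M] [Module V M] {π : V} {S T : Submodule V M}

theorem le (hS : CompactoidRel π S T) : S ≤ T := by
  obtain ⟨F, hFT, hF⟩ := hS 0
  rw [pow_zero, one_smul] at hF
  exact hF.trans (sup_le (span_le.2 hFT) le_rfl)

theorem mono {S₀ : Submodule V M} (hS : CompactoidRel π S T) (h : S₀ ≤ S) :
    CompactoidRel π S₀ T := fun n =>
  let ⟨F, hFT, hF⟩ := hS n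
  ⟨F, hFT, h.trans hF⟩

theorem of_fg (hS : S.FG) (hST : S ≤ T) : CompactoidRel π S T := by
  obtain ⟨F, rfl⟩ := hS
  exact fun _ => ⟨F, subset_span.trans hST, le_sup_left⟩

theorem sup {S₁ S₂ : Submodule V M} (h₁ : CompactoidRel π S₁ T) (h₂ : CompactoidRel π S₂ T) :
    CompactoidRel π (S₁ ⊔ S₂) T := by
  classical
  intro n
  obtain ⟨F₁, hF₁T, hF₁⟩ := h₁ n
  obtain ⟨F₂, hF₂T, hF₂⟩ := h₂ n
  refine ⟨F₁ ∪ F₂, by simpa using And.intro hF₁T hF₂T, ?_⟩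
  rw [Finset.coe_union, span_union]
  exact sup_le (hF₁.trans (sup_le_sup_right le_sup_left _))
    (hF₂.trans (sup_le_sup_right le_sup_right _))

theorem finset_sup {ι : Type*} {s : Finset ι} {S : ι → Submodule V M}
    (h : ∀ i ∈ s, CompactoidRel π (S i) T) : CompactoidRel π (s.sup S) T :=
  Finset.sup_induction (p := fun A => CompactoidRel π A T) (of_fg fg_bot bot_le)
    (fun _ h₁ _ h₂ => h₁.sup h₂) h

theorem of_forall_le_sup (h : ∀ m : ℕ, ∃ A, CompactoidRel π A T ∧ S ≤ A ⊔ π ^ m • T) :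
    CompactoidRel π S T := by
  intro m
  obtain ⟨A, hA, hSA⟩ := h m
  obtain ⟨F, hFT, hF⟩ := hA m
  exact ⟨F, hFT, hSA.trans (sup_le hF le_sup_right)⟩

theorem exists_finset_subset [IsNoetherianRing V] (hS : CompactoidRel π S T) (n : ℕ) :
    ∃ F : Finset M, (F : Set M) ⊆ S ∧ S ≤ span V (F : Set M) ⊔ π ^ n • T :=
  let ⟨F, _, hF⟩ := hS n
  exists_finset_subset_le_span_sup (fg_span F.finite_toSet) hF

theorem inf_comap_pow_smul [IsNoetherianRing V] (htf : Function.Injective (fun x : M => π • x))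
    (hS : CompactoidRel π S T) (k : ℕ) :
    CompactoidRel π (T ⊓ S.comap (DistribSMul.toLinearMap V M (π ^ k))) T := by
  set φ := DistribSMul.toLinearMap V M (π ^ k)
  have hφ : Function.Injective φ := by
    have := htf.iterate k
    rwa [smul_iterate] at this
  refine of_forall_le_sup fun m => ?_
  obtain ⟨F, -, hF⟩ := hS (k + m)
  refine ⟨T ⊓ (span V (F : Set M)).comap φ, of_fg ?_ inf_le_left, ?_⟩
  · refine fg_of_fg_map_injective φ hφ ((fg_span F.finite_toSet).of_le ?_)
    exact (map_mono inf_le_right).trans (map_comap_le _ _)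
  · rw [pow_add, mul_smul] at hF
    calc T ⊓ S.comap φ ≤ T ⊓ ((span V (F : Set M)).comap φ ⊔ π ^ m • T) :=
          inf_le_inf_left _ ((comap_mono hF).trans (comap_sup_map_le _ _ _))
      _ = T ⊓ (span V (F : Set M)).comap φ ⊔ π ^ m • T := by
          rw [inf_comm, sup_comm, sup_inf_assoc_of_le _ (smul_le_self_of_tower _ _), sup_comm,
            inf_comm]

end CompactoidRel

section Envelope

variable {V M : Type*} [CommRing V] [AddCommGroup M] [Module V M]

def compactoidEnvelope (π : V) (S T : Submodule V M) : Submodule V M :=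
  S ⊔ ⨆ n : ℕ, π ^ n • T ⊓ S.comap (DistribSMul.toLinearMap V M (π ^ n))

variable {π : V} {S T : Submodule V M}

theorem le_compactoidEnvelope : S ≤ compactoidEnvelope π S T := le_sup_left

theorem compactoidEnvelope_le (hST : S ≤ T) : compactoidEnvelope π S T ≤ T :=
  sup_le hST (iSup_le fun _ => inf_le_left.trans (smul_le_self_of_tower _ _))

theorem CompactoidRel.envelope_compactoidRel [IsNoetherianRing V]
    (htf : Function.Injective (fun x : M => π • x)) (hS : CompactoidRel π S T) :
    CompactoidRel π (compactoidEnvelope π S T) T := by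
  set R := fun n : ℕ => π ^ n • T ⊓ S.comap (DistribSMul.toLinearMap V M (π ^ n))
  refine CompactoidRel.of_forall_le_sup fun m => ⟨S ⊔ (Finset.range m).sup R, ?_, ?_⟩
  · refine hS.sup (CompactoidRel.finset_sup fun n _ => (hS.inf_comap_pow_smul htf n).mono ?_)
    exact inf_le_inf_right _ (smul_le_self_of_tower _ _)
  · refine sup_le (le_sup_of_le_left le_sup_left) (iSup_le fun n => ?_)
    by_cases hnm : n < m
    · exact le_sup_of_le_left <| le_sup_of_le_right <|
        Finset.le_sup (f := R) (Finset.mem_range.2 hnm)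
    · exact inf_le_left.trans ((antitone_pow_smul π T (not_lt.1 hnm)).trans le_sup_right)

theorem CompactoidRel.compactoidRel_envelope [IsNoetherianRing V] (hS : CompactoidRel π S T) :
    CompactoidRel π S (compactoidEnvelope π S T) := by
  intro n
  obtain ⟨F, hFS, hF⟩ := hS.exists_finset_subset (n + n)
  refine ⟨F, hFS.trans le_compactoidEnvelope, ?_⟩
  set φ := DistribSMul.toLinearMap V M (π ^ n)
  calc S = (span V (F : Set M) ⊔ π ^ (n + n) • T) ⊓ S := (inf_eq_right.2 hF).symm
    _ = span V (F : Set M) ⊔ map φ (π ^ n • T ⊓ S.comap φ) := by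
        rw [sup_inf_assoc_of_le _ (span_le.2 hFS), ← map_inf_eq_map_inf_comap, pow_add, mul_smul]
        rfl
    _ ≤ span V (F : Set M) ⊔ π ^ n • compactoidEnvelope π S T :=
        sup_le_sup_left (map_mono (le_sup_of_le_right (le_iSup_of_le n le_rfl) :
          _ ≤ compactoidEnvelope π S T)) _

end Envelope

theorem compactoidRel_exists_intermediate_compactoid_general
    {V : Type*} [CommRing V] [IsDomain V] [IsDiscreteValuationRing V]
    (π : V)
    {M : Type*} [AddCommGroup M] [Module V M]
    (htf : Function.Injective (fun x : M => π • x))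
    (T S : Submodule V M)
    (hS : CompactoidRel π S T) :
    ∃ S' : Submodule V M, S ≤ S' ∧ S' ≤ T ∧
      CompactoidRel π S' T ∧ CompactoidRel π S S' :=
  ⟨compactoidEnvelope π S T, le_compactoidEnvelope, compactoidEnvelope_le hS.le,
    hS.envelope_compactoidRel htf, hS.compactoidRel_envelope⟩

/-- Proposition 3.6 (nuclearity of the compactoid bornology): if `S ⊆ T` is compactoid
relative to `T` in a torsionfree module over a complete discrete valuation ring, then
there is an intermediate submodule `S ⊆ S' ⊆ T` that is compactoid relative to `T` and
such that `S` is compactoid relative to `S'`. -/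
theorem compactoidRel_exists_intermediate_compactoid
    {V : Type*} [CommRing V] [IsDomain V] [IsDiscreteValuationRing V]
    (π : V) (hπ : Irreducible π) [IsAdicComplete (Ideal.span {π}) V]
    {M : Type*} [AddCommGroup M] [Module V M]
    (htf : Function.Injective (fun x : M => π • x))
    (T S : Submodule V M) (hST : S ≤ T)
    (hS : CompactoidRel π S T) :
    ∃ S' : Submodule V M, S ≤ S' ∧ S' ≤ T ∧
      CompactoidRel π S' T ∧ CompactoidRel π S S' :=
  compactoidRel_exists_intermediate_compactoid_general π htf T S hS
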